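/- arXiv:2602.07633 — 4 statements merged into one kernel-verified Lean document; each statement's English description precedes it below -/
import Mathlib

section
/- Let y : [0,∞) → E be a nonconformity flow trajectory. Then S(y(t)) → τ as t → ∞. -/
open scoped RealInnerProductSpace

/-- The nonconformity velocity field
`v(y) = -λ (S y - τ) ∇S(y) / ‖∇S(y)‖²`. -/
noncomputable def ncVel {n : ℕ} (S : EuclideanSpace ℝ (Fin n) → ℝ) (τ lam : ℝ)
    (y : EuclideanSpace ℝ (Fin n)) : EuclideanSpace ℝ (Fin n) :=
  (-lam * (S y - τ) / ‖gradient S y‖ ^ 2) • gradient S y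

/-!
The flow is built so that the residual `S(y(t)) - τ` obeys `f' = -λ f`: by the chain rule its
derivative is `⟪∇S, v⟫`, and the normalisation by `‖∇S‖²` in `v` makes this exactly
`-λ (S - τ)`. Hence the residual is `(S(y 0) - τ) e^{-λ t}`, which tends to `0`.
-/

open Filter Topology Real

theorem inner_gradient_ncVel {n : ℕ} (S : EuclideanSpace ℝ (Fin n) → ℝ) (τ lam : ℝ)
    {p : EuclideanSpace ℝ (Fin n)} (hp : gradient S p ≠ 0) :
    ⟪gradient S p, ncVel S τ lam p⟫ = -lam * (S p - τ) := by
  have hnorm : ‖gradient S p‖ ^ 2 ≠ 0 := pow_ne_zero 2 (norm_ne_zero_iff.mpr hp)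
  rw [ncVel, real_inner_smul_right, real_inner_self_eq_norm_sq, div_mul_cancel₀ _ hnorm]

theorem hasDerivAt_score_sub_of_hasDerivAt_ncVel {n : ℕ} {S : EuclideanSpace ℝ (Fin n) → ℝ}
    {τ lam t : ℝ} {y : ℝ → EuclideanSpace ℝ (Fin n)} (hS : DifferentiableAt ℝ S (y t))
    (hy : HasDerivAt y (ncVel S τ lam (y t)) t) (hgrad : gradient S (y t) ≠ 0) :
    HasDerivAt (fun s => S (y s) - τ) (-lam * (S (y t) - τ)) t := by
  have hchain := hS.hasGradientAt.hasFDerivAt.comp_hasDerivAt t hy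
  rw [InnerProductSpace.toDual_apply_apply, inner_gradient_ncVel S τ lam hgrad] at hchain
  exact hchain.sub_const τ

theorem eq_mul_exp_of_hasDerivAt_neg_mul {f : ℝ → ℝ} {c : ℝ}
    (hf : ∀ t, 0 ≤ t → HasDerivAt f (-c * f t) t) {t : ℝ} (ht : 0 ≤ t) :
    f t = f 0 * exp (-c * t) := by
  have hderiv : ∀ s, 0 ≤ s → HasDerivAt (fun s => exp (c * s) * f s) 0 s := by
    intro s hs
    have hexp : HasDerivAt (fun s => exp (c * s)) (exp (c * s) * c) s := by
      simpa using ((hasDerivAt_id s).const_mul c).exp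
    exact (hexp.mul (hf s hs)).congr_deriv (by ring)
  have hconst : exp (c * t) * f t = f 0 := by
    simpa using constant_of_has_deriv_right_zero
      (fun s hs => (hderiv s hs.1).continuousAt.continuousWithinAt)
      (fun s hs => (hderiv s hs.1).hasDerivWithinAt) t ⟨ht, le_rfl⟩
  rw [← hconst, mul_comm, ← mul_assoc, ← exp_add]
  simp

theorem tendsto_mul_exp_neg_mul_atTop (a : ℝ) {c : ℝ} (hc : 0 < c) :
    Tendsto (fun t => a * exp (-c * t)) atTop (𝓝 0) := by
  have hexp : Tendsto (fun t => exp (-(c * t))) atTop (𝓝 0) :=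
    tendsto_exp_neg_atTop_nhds_zero.comp (tendsto_id.const_mul_atTop hc)
  simpa using hexp.const_mul a

/-- along a nonconformity flow trajectory, `S(y(t)) → τ` as `t → ∞`. -/
theorem score_converges_to_threshold {n : ℕ} (S : EuclideanSpace ℝ (Fin n) → ℝ)
    (hS : Differentiable ℝ S) (τ lam : ℝ) (hlam : 0 < lam)
    (y : ℝ → EuclideanSpace ℝ (Fin n))
    (hy : ∀ t : ℝ, 0 ≤ t → HasDerivAt y (ncVel S τ lam (y t)) t)
    (hgrad : ∀ t : ℝ, 0 ≤ t → gradient S (y t) ≠ 0) :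
    Filter.Tendsto (fun t => S (y t)) Filter.atTop (nhds τ) := by
  have hresidual : ∀ t, 0 ≤ t → S (y t) - τ = (S (y 0) - τ) * exp (-lam * t) :=
    fun t ht => eq_mul_exp_of_hasDerivAt_neg_mul (f := fun s => S (y s) - τ)
      (fun s hs => hasDerivAt_score_sub_of_hasDerivAt_ncVel (hS _) (hy s hs) (hgrad s hs)) ht
  rw [← tendsto_sub_nhds_zero_iff]
  refine (tendsto_mul_exp_neg_mul_atTop (S (y 0) - τ) hlam).congr' ?_
  filter_upwards [eventually_ge_atTop 0] with t ht
  exact (hresidual t ht).symm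
end

section
/- Let y : [0,∞) → E be a nonconformity flow trajectory, let m > 0 and t₀ ≥ 0, and assume ‖∇S(y(t))‖ ≥ m for all t ≥ t₀. Then for every t ≥ t₀, the speed of the trajectory satisfies ‖y'(t)‖ ≤ (λ/m)·|S(y(0)) − τ|·e^{−λ t}. -/
open scoped RealInnerProductSpace

/-! Along the flow the residual `S(y(t)) - τ` solves `g' = -λ g`, hence equals
`(S(y(0)) - τ) e^{-λt}`; the speed is `λ |S(y(t)) - τ| / ‖∇S(y(t))‖`, and the lower bound `m` on
the gradient turns this into the claimed exponential bound. -/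

theorem eq_mul_exp_of_hasDerivAt_mul_self {g : ℝ → ℝ} {c : ℝ}
    (hg : ∀ t, 0 ≤ t → HasDerivAt g (c * g t) t) {t : ℝ} (ht : 0 ≤ t) :
    g t = g 0 * Real.exp (c * t) := by
  set h : ℝ → ℝ := fun s => g s * Real.exp (-(c * s))
  have hderiv : ∀ s, 0 ≤ s → HasDerivAt h 0 s := by
    intro s hs
    have hexp : HasDerivAt (fun s => Real.exp (-(c * s))) (Real.exp (-(c * s)) * -c) s :=
      (((hasDerivAt_id s).const_mul c).neg.congr_deriv (by simp)).exp
    exact ((hg s hs).mul hexp).congr_deriv (by ring)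
  have hconst : h t = h 0 :=
    constant_of_has_deriv_right_zero
      (fun s hs => (hderiv s hs.1).continuousAt.continuousWithinAt)
      (fun s hs => (hderiv s hs.1).hasDerivWithinAt) t (Set.right_mem_Icc.2 ht)
  calc g t = h t * Real.exp (c * t) := by
        simp only [h, mul_assoc, ← Real.exp_add, neg_add_cancel, Real.exp_zero, mul_one]
    _ = g 0 * Real.exp (c * t) := by simp [hconst, h]

section Flow

variable {n : ℕ} {S : EuclideanSpace ℝ (Fin n) → ℝ} {τ lam : ℝ}

theorem fderiv_apply_ncVel {x : EuclideanSpace ℝ (Fin n)} (hS : DifferentiableAt ℝ S x)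
    (hx : gradient S x ≠ 0) : fderiv ℝ S x (ncVel S τ lam x) = -lam * (S x - τ) := by
  rw [hS.hasGradientAt.hasFDerivAt.fderiv, InnerProductSpace.toDual_apply_apply, ncVel,
    real_inner_smul_right, real_inner_self_eq_norm_sq,
    div_mul_cancel₀ _ (pow_ne_zero 2 (norm_ne_zero_iff.2 hx))]

theorem norm_ncVel (x : EuclideanSpace ℝ (Fin n)) :
    ‖ncVel S τ lam x‖ = |lam| * |S x - τ| / ‖gradient S x‖ := by
  rcases eq_or_ne ‖gradient S x‖ 0 with h | h
  · simp [ncVel, h]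
  · rw [ncVel, norm_smul, Real.norm_eq_abs, abs_div, abs_mul, abs_neg, abs_pow, abs_norm]
    field_simp

theorem hasDerivAt_residual_of_flow {y : ℝ → EuclideanSpace ℝ (Fin n)} {t : ℝ}
    (hS : DifferentiableAt ℝ S (y t)) (hy : HasDerivAt y (ncVel S τ lam (y t)) t)
    (hgrad : gradient S (y t) ≠ 0) :
    HasDerivAt (fun s => S (y s) - τ) (-lam * (S (y t) - τ)) t := by
  rw [← fderiv_apply_ncVel hS hgrad]
  exact (hS.hasFDerivAt.comp_hasDerivAt t hy).sub_const τ

end Flow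

/-- if `‖∇S(y(t))‖ ≥ m` for all `t ≥ t₀`, the trajectory speed
satisfies `‖y'(t)‖ ≤ (λ/m) |S(y(0)) - τ| e^{-λ t}` for `t ≥ t₀`. -/
theorem speed_exponential_bound {n : ℕ} (S : EuclideanSpace ℝ (Fin n) → ℝ)
    (hS : Differentiable ℝ S) (τ lam : ℝ) (hlam : 0 < lam)
    (y : ℝ → EuclideanSpace ℝ (Fin n))
    (hy : ∀ t : ℝ, 0 ≤ t → HasDerivAt y (ncVel S τ lam (y t)) t)
    (hgrad : ∀ t : ℝ, 0 ≤ t → gradient S (y t) ≠ 0)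
    (m t₀ : ℝ) (hm : 0 < m) (ht₀ : 0 ≤ t₀)
    (hlow : ∀ t : ℝ, t₀ ≤ t → m ≤ ‖gradient S (y t)‖) :
    ∀ t : ℝ, t₀ ≤ t →
      ‖deriv y t‖ ≤ (lam / m) * |S (y 0) - τ| * Real.exp (-lam * t) := by
  intro t ht
  have ht0 : 0 ≤ t := ht₀.trans ht
  have hresidual : S (y t) - τ = (S (y 0) - τ) * Real.exp (-lam * t) :=
    eq_mul_exp_of_hasDerivAt_mul_self (g := fun s => S (y s) - τ)
      (fun s hs => hasDerivAt_residual_of_flow (hS _) (hy s hs) (hgrad s hs)) ht0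
  rw [(hy t ht0).deriv, norm_ncVel, hresidual, abs_mul, Real.abs_exp, abs_of_pos hlam]
  calc lam * (|S (y 0) - τ| * Real.exp (-lam * t)) / ‖gradient S (y t)‖
      ≤ lam * (|S (y 0) - τ| * Real.exp (-lam * t)) / m :=
        div_le_div_of_nonneg_left (by positivity) hm (hlow t ht)
    _ = lam / m * |S (y 0) - τ| * Real.exp (-lam * t) := by ring
end

section
/- Let π be a probability measure on (0,1), and for each α ∈ (0,1) let ν_α be a probability measure on Y supported on the boundary set ∂C_α = {y ∈ Y : S(y) = τ(α)} (i.e. ν_α(∂C_α) = 1), such that for each measurable A ⊆ Y the map α ↦ ν_α(A) is measurable. Assume the threshold map satisfies the nesting property: τ(α) ≤ τ(β) if and only if α ≥ β, for all α, β ∈ (0,1). Define the conformal predictive distribution P(A) := ∫_{(0,1)} ν_α(A) dπ(α). Then for every β ∈ (0,1), P(C_β) = π([β, 1)), where C_β = {y ∈ Y : S(y) ≤ τ(β)}. -/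
/-! Each `ν α` is concentrated on the level set `S = τ α`, so `ν α (C_β)` is `1` if
`τ α ≤ τ β` and `0` otherwise; by nesting this is the indicator of `α ≥ β`, whose
`π`-integral over `(0,1)` is `π [β, 1)`. -/

open MeasureTheory

section AeConst

variable {Y α : Type*} [MeasurableSpace Y] {μ : Measure Y} {f : Y → α} {c : α}

theorem ae_eq_const_of_measure_eq_one [MeasurableSpace α] [MeasurableSingletonClass α]
    [IsProbabilityMeasure μ] (hf : Measurable f) (h : μ {y | f y = c} = 1) :
    ∀ᵐ y ∂μ, f y = c :=
  (ae_iff_measure_eq (p := fun y => f y = c) (hf (measurableSet_singleton c)).nullMeasurableSet).2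
    (by rw [h, measure_univ])

theorem measure_preimage_of_ae_eq_const (h : ∀ᵐ y ∂μ, f y = c) (s : Set α) :
    μ (f ⁻¹' s) = s.indicator (fun _ => μ Set.univ) c := by
  have hae : f ⁻¹' s =ᵐ[μ] {_y | c ∈ s} :=
    Filter.eventuallyEq_set.2 (h.mono fun y hy => by simp [hy])
  by_cases hc : c ∈ s <;> simp [measure_congr hae, hc]

end AeConst

theorem cpd_calibration_general {Y : Type*} [MeasurableSpace Y]
    (S : Y → ℝ) (hS : Measurable S) (τ : ℝ → ℝ)
    (hnest : ∀ a ∈ Set.Ioo (0 : ℝ) 1, ∀ b ∈ Set.Ioo (0 : ℝ) 1,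
      (τ a ≤ τ b ↔ b ≤ a))
    (π : Measure ℝ) [IsProbabilityMeasure π]
    (ν : ℝ → Measure Y)
    (hprob : ∀ α ∈ Set.Ioo (0 : ℝ) 1, IsProbabilityMeasure (ν α))
    (hsupp : ∀ α ∈ Set.Ioo (0 : ℝ) 1, ν α {y | S y = τ α} = 1)
    (β : ℝ) (hβ : β ∈ Set.Ioo (0 : ℝ) 1) :
    ∫⁻ α in Set.Ioo (0 : ℝ) 1, ν α {y | S y ≤ τ β} ∂π = π (Set.Ico β 1) := by
  have hcoverage : ∀ α ∈ Set.Ioo (0 : ℝ) 1,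
      ν α {y | S y ≤ τ β} = (Set.Ici β).indicator 1 α := by
    intro α hα
    have := hprob α hα
    change ν α (S ⁻¹' Set.Iic (τ β)) = _
    rw [measure_preimage_of_ae_eq_const (ae_eq_const_of_measure_eq_one hS (hsupp α hα))]
    simp [Set.indicator_apply, hnest α hα β hβ]
  have hinter : Set.Ici β ∩ Set.Ioo 0 1 = Set.Ico β 1 := by
    rw [← Set.Ioi_inter_Iio, ← Set.inter_assoc,
      Set.inter_eq_left.2 (Set.Ici_subset_Ioi.2 hβ.1), Set.Ici_inter_Iio]
  rw [setLIntegral_congr_fun measurableSet_Ioo hcoverage,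
    lintegral_indicator_one measurableSet_Ici, Measure.restrict_apply measurableSet_Ici, hinter]

/-- the conformal predictive distribution
`P(A) = ∫ ν_α(A) dπ(α)` obtained by mixing boundary-supported measures over
confidence levels satisfies `P(C_β) = π([β, 1))` for every `β ∈ (0,1)`. -/
theorem cpd_calibration {Y : Type*} [MeasurableSpace Y]
    (S : Y → ℝ) (hS : Measurable S) (τ : ℝ → ℝ)
    (hnest : ∀ a ∈ Set.Ioo (0 : ℝ) 1, ∀ b ∈ Set.Ioo (0 : ℝ) 1,
      (τ a ≤ τ b ↔ b ≤ a))
    (π : Measure ℝ) [IsProbabilityMeasure π] (hπ : π (Set.Ioo (0 : ℝ) 1)ᶜ = 0)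
    (ν : ℝ → Measure Y)
    (hprob : ∀ α ∈ Set.Ioo (0 : ℝ) 1, IsProbabilityMeasure (ν α))
    (hsupp : ∀ α ∈ Set.Ioo (0 : ℝ) 1, ν α {y | S y = τ α} = 1)
    (hmeas : ∀ A : Set Y, MeasurableSet A → Measurable fun α => ν α A)
    (β : ℝ) (hβ : β ∈ Set.Ioo (0 : ℝ) 1) :
    ∫⁻ α in Set.Ioo (0 : ℝ) 1, ν α {y | S y ≤ τ β} ∂π = π (Set.Ico β 1) :=
  cpd_calibration_general S hS τ hnest π ν hprob hsupp β hβ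
end

section
/- Let π be the uniform (Lebesgue) probability measure on (0,1), and for each α ∈ (0,1) let ν_α be a probability measure on Y supported on the boundary set ∂C_α = {y ∈ Y : S(y) = τ(α)} (i.e. ν_α(∂C_α) = 1), such that for each measurable A ⊆ Y the map α ↦ ν_α(A) is measurable. Assume the threshold map satisfies the nesting property: τ(α) ≤ τ(β) if and only if α ≥ β, for all α, β ∈ (0,1). Define P(A) := ∫_{(0,1)} ν_α(A) dα. Then for every β ∈ (0,1), P(C_β) = 1 − β; that is, the conformal predictive distribution is exactly conformally calibrated. -/
/-!
Since `ν α` is concentrated on the level set `{S = τ α}`, the mass it gives to `C_β` is `1` or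
`0` according as `τ α ≤ τ β`, i.e. by nesting according as `β ≤ α`. Integrating this indicator
of `[β, 1)` against the uniform law on `(0, 1)` gives `1 - β`.
-/

open MeasureTheory Set

lemma measure_preimage_eq_indicator_of_measure_fiber_eq_one {Y X : Type*}
    [MeasurableSpace Y] [MeasurableSpace X] [MeasurableSingletonClass X]
    {μ : Measure Y} [IsProbabilityMeasure μ] {f : Y → X} (hf : Measurable f) {c : X}
    (hc : μ (f ⁻¹' {c}) = 1) {s : Set X} (hs : MeasurableSet s) :
    μ (f ⁻¹' s) = s.indicator 1 c := by
  have hf_const : f =ᵐ[μ] fun _ => c :=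
    (ae_iff_measure_eq (hf (measurableSet_singleton c)).nullMeasurableSet).2
      (hc.trans measure_univ.symm)
  rw [← Measure.map_apply hf hs, Measure.map_congr hf_const, Measure.map_const,
    measure_univ, one_smul, Measure.dirac_apply' c hs]

lemma indicator_Iic_comp_eq_indicator_Ici {M : Type*} [Zero M] [One M] {τ : ℝ → ℝ}
    {s : Set ℝ} (hτ : ∀ a ∈ s, ∀ b ∈ s, τ a ≤ τ b ↔ b ≤ a) {a b : ℝ} (ha : a ∈ s)
    (hb : b ∈ s) : (Iic (τ b)).indicator (1 : ℝ → M) (τ a) = (Ici b).indicator 1 a := by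
  simp only [indicator_apply, mem_Iic, mem_Ici, hτ a ha b hb, Pi.one_apply]

lemma setLIntegral_Ioo_zero_one_indicator_Ici {β : ℝ} (hβ : 0 < β) :
    ∫⁻ α in Ioo (0 : ℝ) 1, (Ici β).indicator 1 α = ENNReal.ofReal (1 - β) := by
  have hinter : Ici β ∩ Ioo (0 : ℝ) 1 = Ico β 1 := by
    rw [← Ioi_inter_Iio, ← inter_assoc, inter_eq_left.2 (Ici_subset_Ioi.2 hβ), Ici_inter_Iio]
  rw [lintegral_indicator_one measurableSet_Ici, Measure.restrict_apply measurableSet_Ici,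
    hinter, Real.volume_Ico]

theorem cpd_uniform_calibration_general {Y : Type*} [MeasurableSpace Y]
    (S : Y → ℝ) (hS : Measurable S) (τ : ℝ → ℝ)
    (hnest : ∀ a ∈ Set.Ioo (0 : ℝ) 1, ∀ b ∈ Set.Ioo (0 : ℝ) 1,
      (τ a ≤ τ b ↔ b ≤ a))
    (ν : ℝ → Measure Y)
    (hprob : ∀ α ∈ Set.Ioo (0 : ℝ) 1, IsProbabilityMeasure (ν α))
    (hsupp : ∀ α ∈ Set.Ioo (0 : ℝ) 1, ν α {y | S y = τ α} = 1)
    (β : ℝ) (hβ : β ∈ Set.Ioo (0 : ℝ) 1) :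
    ∫⁻ α in Set.Ioo (0 : ℝ) 1, ν α {y | S y ≤ τ β} =
      ENNReal.ofReal (1 - β) := by
  have hindicator : ∀ α ∈ Ioo (0 : ℝ) 1, ν α {y | S y ≤ τ β} = (Ici β).indicator 1 α := by
    intro α hα
    have := hprob α hα
    rw [← indicator_Iic_comp_eq_indicator_Ici hnest hα hβ]
    exact measure_preimage_eq_indicator_of_measure_fiber_eq_one hS (hsupp α hα)
      measurableSet_Iic
  rw [setLIntegral_congr_fun measurableSet_Ioo hindicator]
  exact setLIntegral_Ioo_zero_one_indicator_Ici hβ.1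

/-- with the uniform mixing measure on `(0,1)`, the conformal
predictive distribution is exactly conformally calibrated:
`P(C_β) = 1 - β` for every `β ∈ (0,1)`. -/
theorem cpd_uniform_calibration {Y : Type*} [MeasurableSpace Y]
    (S : Y → ℝ) (hS : Measurable S) (τ : ℝ → ℝ)
    (hnest : ∀ a ∈ Set.Ioo (0 : ℝ) 1, ∀ b ∈ Set.Ioo (0 : ℝ) 1,
      (τ a ≤ τ b ↔ b ≤ a))
    (ν : ℝ → Measure Y)
    (hprob : ∀ α ∈ Set.Ioo (0 : ℝ) 1, IsProbabilityMeasure (ν α))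
    (hsupp : ∀ α ∈ Set.Ioo (0 : ℝ) 1, ν α {y | S y = τ α} = 1)
    (hmeas : ∀ A : Set Y, MeasurableSet A → Measurable fun α => ν α A)
    (β : ℝ) (hβ : β ∈ Set.Ioo (0 : ℝ) 1) :
    ∫⁻ α in Set.Ioo (0 : ℝ) 1, ν α {y | S y ≤ τ β} =
      ENNReal.ofReal (1 - β) :=
  cpd_uniform_calibration_general S hS τ hnest ν hprob hsupp β hβ
end
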